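/- The positive continuous bilinear operator A : ℝ × ℓ_2 → ℓ_∞, A(λ, x) = λx (where ℓ_2 is included in ℓ_∞), is almost Dunford–Pettis but not separately almost Dunford–Pettis. More precisely: (i) ‖A(λ_n, x_n)‖_∞ → 0 whenever (λ_n) is a disjoint weakly null sequence in ℝ and (x_n) is a disjoint weakly null sequence in ℓ_2; (ii) the linear operator x ↦ A(1, x) from ℓ_2 to ℓ_∞ is not almost Dunford–Pettis, since the canonical unit vectors (e_n) form a disjoint weakly null sequence in ℓ_2 with ‖A(1, e_n)‖_∞ = 1 for all n. -/

import Mathlib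

open Filter Topology
open scoped ENNReal

noncomputable section

instance : Fact ((1 : ℝ≥0∞) ≤ 2) := ⟨by norm_num⟩
instance : Fact ((1 : ℝ≥0∞) ≤ ∞) := ⟨le_top⟩

/-- A sequence is weakly null if `f (x n) → 0` for every continuous linear functional `f`. -/
def WeaklyNullLp {p : ℝ≥0∞} [Fact (1 ≤ p)] (x : ℕ → lp (fun _ : ℕ => ℝ) p) : Prop :=
  ∀ f : lp (fun _ : ℕ => ℝ) p →L[ℝ] ℝ, Tendsto (fun n => f (x n)) atTop (𝓝 0)

/-- A sequence in `ℓ_p` is disjoint (for the coordinatewise order) if for `n ≠ k` the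
coordinatewise infimum of `|x n|` and `|x k|` vanishes. -/
def DisjointSeqLp {p : ℝ≥0∞} (x : ℕ → lp (fun _ : ℕ => ℝ) p) : Prop :=
  ∀ n k, n ≠ k → ∀ i, min |x n i| |x k i| = 0

/-- The `n`-th canonical unit vector of `ℓ_p`. -/
def unitVec (p : ℝ≥0∞) (n : ℕ) : lp (fun _ : ℕ => ℝ) p := lp.single p n 1

/-- The inclusion of `ℓ_2` into `ℓ_∞`. -/
def incl2inf (x : lp (fun _ : ℕ => ℝ) 2) : lp (fun _ : ℕ => ℝ) ∞ :=
  ⟨⇑x, memℓp_infty ⟨‖x‖, by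
    rintro r ⟨i, rfl⟩
    exact lp.norm_apply_le_norm (by norm_num) x i⟩⟩

/-!
Part (i) holds because `ℝ` has no nontrivial disjoint sequences: two disjoint reals cannot
both be nonzero, so `λ n = 0` for all but at most one `n`. For part (ii), the unit vectors of
`ℓ_2` are orthonormal, hence weakly null by Bessel's inequality and the Riesz representation
of functionals, while each of them still has norm `1` in `ℓ_∞`.
-/

section Disjoint

variable {α ι : Type*} [AddCommGroup α] [LinearOrder α] [IsOrderedAddMonoid α]

theorem min_abs_eq_zero_iff {a b : α} : min |a| |b| = 0 ↔ a = 0 ∨ b = 0 := by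
  refine ⟨fun h => ?_, by rintro (rfl | rfl) <;> simp⟩
  rcases min_choice |a| |b| with hmin | hmin <;> rw [hmin, abs_eq_zero] at h
  exacts [Or.inl h, Or.inr h]

theorem subsingleton_support_of_pairwise_min_abs_eq_zero {l : ι → α}
    (hl : ∀ n k, n ≠ k → min |l n| |l k| = 0) : {n | l n ≠ 0}.Subsingleton := by
  intro n hn k hk
  by_contra hnk
  exact (min_abs_eq_zero_iff.mp (hl n k hnk)).elim hn hk

end Disjoint

section Orthonormal

variable {𝕜 E ι : Type*} [RCLike 𝕜] [NormedAddCommGroup E] [InnerProductSpace 𝕜 E]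
  {v : ι → E}

theorem Orthonormal.tendsto_cofinite_inner_zero (hv : Orthonormal 𝕜 v) (x : E) :
    Tendsto (fun i => inner 𝕜 x (v i)) cofinite (𝓝 0) := by
  have hsq : Tendsto (fun i => ‖inner 𝕜 (v i) x‖ ^ 2) cofinite (𝓝 0) :=
    (hv.inner_products_summable x).tendsto_cofinite_zero
  rw [tendsto_zero_iff_norm_tendsto_zero]
  simpa [norm_inner_symm, Real.sqrt_sq (norm_nonneg _)] using hsq.sqrt

theorem Orthonormal.tendsto_cofinite_apply_zero [CompleteSpace E] (hv : Orthonormal 𝕜 v)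
    (f : StrongDual 𝕜 E) : Tendsto (fun i => f (v i)) cofinite (𝓝 0) := by
  simpa only [InnerProductSpace.toDual_symm_apply] using
    hv.tendsto_cofinite_inner_zero ((InnerProductSpace.toDual 𝕜 E).symm f)

end Orthonormal

theorem orthonormal_unitVec : Orthonormal ℝ (unitVec 2) := by
  rw [orthonormal_iff_ite]
  intro i j
  simp [unitVec, lp.inner_single_left, Pi.single_apply]

theorem weaklyNullLp_unitVec : WeaklyNullLp (unitVec 2) := fun f => by
  simpa only [Nat.cofinite_eq_atTop] using orthonormal_unitVec.tendsto_cofinite_apply_zero f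

theorem disjointSeqLp_unitVec (p : ℝ≥0∞) : DisjointSeqLp (unitVec p) := by
  intro n k hnk i
  rw [min_abs_eq_zero_iff]
  by_cases hin : i = n
  · subst hin
    exact Or.inr (lp.single_apply_ne p k 1 hnk)
  · exact Or.inl (lp.single_apply_ne p n 1 hin)

theorem incl2inf_unitVec (n : ℕ) : incl2inf (unitVec 2 n) = unitVec ∞ n := by
  ext i
  simp [incl2inf, unitVec, lp.single_apply]

theorem norm_unitVec {p : ℝ≥0∞} (hp : 0 < p) (n : ℕ) : ‖unitVec p n‖ = 1 := by
  simp [unitVec, lp.norm_single hp]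

/-- The positive continuous bilinear operator `A : ℝ × ℓ_2 → ℓ_∞`, `A (λ, x) = λ x`, is
almost Dunford-Pettis but not separately almost Dunford-Pettis:  the operator
`x ↦ A (1, x)` fails to be almost Dunford-Pettis, as witnessed by the canonical unit
vectors of `ℓ_2`. -/
theorem smul_inclusion_almostDP_not_separately :
    -- (i) `A` is almost Dunford-Pettis
    (∀ (l : ℕ → ℝ) (x : ℕ → lp (fun _ : ℕ => ℝ) 2),
      (∀ n k, n ≠ k → min |l n| |l k| = 0) →
      (∀ f : ℝ →L[ℝ] ℝ, Tendsto (fun n => f (l n)) atTop (𝓝 0)) →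
      DisjointSeqLp x → WeaklyNullLp x →
      Tendsto (fun n => ‖l n • incl2inf (x n)‖) atTop (𝓝 0)) ∧
    -- (ii) `x ↦ A (1, x)` is not almost Dunford-Pettis:
    -- the unit vectors are disjoint and weakly null in `ℓ_2` ...
    DisjointSeqLp (unitVec 2) ∧ WeaklyNullLp (unitVec 2) ∧
    -- ... but `‖A (1, e n)‖ = 1` for every `n`
    (∀ n, ‖(1 : ℝ) • incl2inf (unitVec 2 n)‖ = 1) ∧
    ¬ (∀ x : ℕ → lp (fun _ : ℕ => ℝ) 2, DisjointSeqLp x → WeaklyNullLp x →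
        Tendsto (fun n => ‖(1 : ℝ) • incl2inf (x n)‖) atTop (𝓝 0)) := by
  have hnorm (n : ℕ) : ‖(1 : ℝ) • incl2inf (unitVec 2 n)‖ = 1 := by
    rw [one_smul, incl2inf_unitVec, norm_unitVec (by simp)]
  refine ⟨?_, disjointSeqLp_unitVec 2, weaklyNullLp_unitVec, hnorm, fun hADP => ?_⟩
  · intro l x hl _ _ _
    have hl0 : ∀ᶠ n in atTop, l n = 0 := by
      simpa [← Nat.cofinite_eq_atTop] using
        (subsingleton_support_of_pairwise_min_abs_eq_zero hl).finite
    refine tendsto_const_nhds.congr' ?_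
    filter_upwards [hl0] with n hn
    simp [hn]
  · have hone := (hADP _ (disjointSeqLp_unitVec 2) weaklyNullLp_unitVec).congr hnorm
    exact one_ne_zero (tendsto_const_nhds_iff.mp hone)
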